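/- There exist finite sets A = {1,2,3}×{1,2,3}, B = {1,2,3}, the projection π : A → B onto the second coordinate, and probability measures μ, ρ on {0,1}^A such that: μ is a π-lift; for every section s of π, the pushdown of μ is stochastically dominated by the s-marginal of ρ; yet μ is NOT stochastically dominated by ρ. Explicitly, μ is uniform on the four matrices {zero matrix, 1 in positions (1,1) and (1,2), 1 in positions (2,1) and (2,3), 1 in positions (3,2) and (3,3)}, and ρ is uniform on the all-ones matrix and the three matrices obtained from it by zeroing out the positions (1,3),(2,2),(3,1); (1,2),(2,1),(3,3); and (1,1),(2,3),(3,2) respectively. -/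

import Mathlib

open MeasureTheory ProbabilityTheory

/-- `μ` is stochastically dominated by `ν`. -/
def StochDom {E : Type*} [MeasurableSpace E] [Preorder E] (μ ν : Measure E) : Prop :=
  ∃ κ : Measure (E × E), IsProbabilityMeasure κ ∧ κ.map Prod.fst = μ ∧
    κ.map Prod.snd = ν ∧ κ {q | q.1 ≤ q.2} = 1

/-- Configurations are `{0,1}`-matrices indexed by (row, column); columns are fibres of
the projection onto the second coordinate. -/
abbrev Config := Fin 3 × Fin 3 → Bool

noncomputable def μcex : Measure Config :=
  (4 : ENNReal)⁻¹ • (Measure.dirac (fun _ => false)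
    + Measure.dirac (fun a => decide (a = (0, 0) ∨ a = (0, 1)))
    + Measure.dirac (fun a => decide (a = (1, 0) ∨ a = (1, 2)))
    + Measure.dirac (fun a => decide (a = (2, 1) ∨ a = (2, 2))))

noncomputable def ρcex : Measure Config :=
  (4 : ENNReal)⁻¹ • (Measure.dirac (fun _ => true)
    + Measure.dirac (fun a => decide (¬(a = (0, 2) ∨ a = (1, 1) ∨ a = (2, 0))))
    + Measure.dirac (fun a => decide (¬(a = (0, 1) ∨ a = (1, 0) ∨ a = (2, 2))))
    + Measure.dirac (fun a => decide (¬(a = (0, 0) ∨ a = (1, 2) ∨ a = (2, 1))))) 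

/-! All measures involved are uniform on four atoms, so a coupling can be taken to be a
matching of atoms. The zero sets of the last three atoms of `ρcex` are the three transversals
`i + j ≡ c (mod 3)` of a Latin square, so every section sees them as a partition of the columns,
and for each of the 27 sections a finite check finds a matching under which every pushdown atom
lies below its partner. Conversely, each nonzero atom of `μcex` lies below only the first two
atoms of `ρcex`, so the upper set they generate has `μcex`-mass `3/4` but `ρcex`-mass `1/2`. -/

open scoped ENNReal

namespace MeasureTheory.Measure

variable {ι α β : Type*} [Fintype ι] [MeasurableSpace α] [MeasurableSpace β]

noncomputable def empiricalMeasure (x : ι → α) : Measure α :=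
  (Fintype.card ι : ℝ≥0∞)⁻¹ • ∑ i, dirac (x i)

theorem map_empiricalMeasure {f : α → β} (hf : Measurable f) (x : ι → α) :
    (empiricalMeasure x).map f = empiricalMeasure (f ∘ x) := by
  simp [empiricalMeasure, map_finset_sum' hf.aemeasurable, map_dirac' hf]

theorem empiricalMeasure_comp_equiv (x : ι → α) (g : ι ≃ ι) :
    empiricalMeasure (x ∘ g) = empiricalMeasure x := by
  simp only [empiricalMeasure, Function.comp_apply, Equiv.sum_comp g (fun i => dirac (x i))]

theorem empiricalMeasure_apply [MeasurableSingletonClass α] (x : ι → α) (s : Set α)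
    [DecidablePred (· ∈ s)] :
    empiricalMeasure x s = (Finset.univ.filter fun i => x i ∈ s).card / Fintype.card ι := by
  rw [ENNReal.div_eq_inv_mul]
  simp [empiricalMeasure, dirac_apply, Set.indicator_apply, Finset.sum_boole]

theorem empiricalMeasure_apply_of_forall_mem [MeasurableSingletonClass α] [Nonempty ι]
    {x : ι → α} {s : Set α} (hs : ∀ i, x i ∈ s) : empiricalMeasure x s = 1 := by
  classical
  rw [empiricalMeasure_apply, Finset.filter_true_of_mem fun i _ => hs i, Finset.card_univ]
  exact ENNReal.div_self (by simp) (by simp)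

end MeasureTheory.Measure

open Measure

section StochDom

variable {ι E : Type*} [MeasurableSpace E] [Preorder E]

theorem stochDom_empiricalMeasure_of_perm [Fintype ι] [Nonempty ι] [MeasurableSingletonClass E]
    {x y : ι → E} (g : ι ≃ ι) (hxy : ∀ i, x i ≤ y (g i)) :
    StochDom (empiricalMeasure x) (empiricalMeasure y) := by
  refine ⟨empiricalMeasure fun i => (x i, y (g i)), ⟨empiricalMeasure_apply_of_forall_mem
    fun _ => trivial⟩, ?_, ?_, empiricalMeasure_apply_of_forall_mem hxy⟩
  · rw [map_empiricalMeasure measurable_fst]; rfl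
  · rw [map_empiricalMeasure measurable_snd, ← empiricalMeasure_comp_equiv y g]; rfl

theorem StochDom.apply_le_of_isUpperSet {μ ν : Measure E} (h : StochDom μ ν) {U : Set E}
    (hU : IsUpperSet U) (hUm : MeasurableSet U)
    (hle : MeasurableSet {q : E × E | q.1 ≤ q.2}) : μ U ≤ ν U := by
  obtain ⟨κ, hκ, rfl, rfl, hκle⟩ := h
  have hae : ∀ᵐ q ∂κ, q.1 ≤ q.2 := by
    rw [ae_iff, ← Set.compl_ofPred, prob_compl_eq_zero_iff hle]; exact hκle
  rw [map_apply measurable_fst hUm, map_apply measurable_snd hUm]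
  exact measure_mono_ae (hae.mono fun q hq hqU => hU hq hqU)

end StochDom

def μAtom : Fin 4 → Config :=
  ![fun _ => false, fun a => decide (a = (0, 0) ∨ a = (0, 1)),
    fun a => decide (a = (1, 0) ∨ a = (1, 2)), fun a => decide (a = (2, 1) ∨ a = (2, 2))]

def ρAtom : Fin 4 → Config :=
  ![fun _ => true, fun a => decide (¬(a = (0, 2) ∨ a = (1, 1) ∨ a = (2, 0))),
    fun a => decide (¬(a = (0, 1) ∨ a = (1, 0) ∨ a = (2, 2))),
    fun a => decide (¬(a = (0, 0) ∨ a = (1, 2) ∨ a = (2, 1)))]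

theorem μcex_eq_empiricalMeasure : μcex = empiricalMeasure μAtom := by
  simp [μcex, empiricalMeasure, Fin.sum_univ_four, μAtom]

theorem ρcex_eq_empiricalMeasure : ρcex = empiricalMeasure ρAtom := by
  simp [ρcex, empiricalMeasure, Fin.sum_univ_four, ρAtom]

def pushdown (x : Config) : Fin 3 → Bool := fun b => x (0, b) || x (1, b) || x (2, b)

theorem exists_perm_pushdown_le_marginal (r : Fin 3 → Fin 3) :
    ∃ g : Equiv.Perm (Fin 4), ∀ i b, pushdown (μAtom i) b ≤ ρAtom (g i) (r b, b) := by
  revert r; decide +kernel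

abbrev upperSetNonzeroμAtoms : Set Config := {x | ∃ j, j ≠ 0 ∧ ∀ a, μAtom j a ≤ x a}

theorem isUpperSet_upperSetNonzeroμAtoms : IsUpperSet upperSetNonzeroμAtoms :=
  fun _ _ hxy ⟨j, hj, hjx⟩ => ⟨j, hj, fun a => (hjx a).trans (hxy a)⟩

theorem μcex_upperSetNonzeroμAtoms : μcex upperSetNonzeroμAtoms = 3 / 4 := by
  rw [μcex_eq_empiricalMeasure, empiricalMeasure_apply,
    show (Finset.univ.filter fun i => μAtom i ∈ upperSetNonzeroμAtoms).card = 3 by decide]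
  rfl

theorem ρcex_upperSetNonzeroμAtoms : ρcex upperSetNonzeroμAtoms = 2 / 4 := by
  rw [ρcex_eq_empiricalMeasure, empiricalMeasure_apply,
    show (Finset.univ.filter fun i => ρAtom i ∈ upperSetNonzeroμAtoms).card = 2 by decide]
  rfl

/-- **A counterexample:** `μcex` is a lift for the column projection, its pushdown is
stochastically dominated by the `s`-marginal of `ρcex` for every section `s`, and yet
`μcex` is not stochastically dominated by `ρcex`. -/
theorem stmt10 :
    -- `μcex` is a `π`-lift for `π = Prod.snd` (each column has at most one `1`)
    μcex {x | ∀ a a' : Fin 3 × Fin 3, a.2 = a'.2 → x a = true → x a' = true → a = a'} = 1 ∧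
    -- for every section `s` of the column projection, the pushdown of `μcex` is
    -- stochastically dominated by the `s`-marginal of `ρcex`
    (∀ s : Fin 3 → Fin 3 × Fin 3, (∀ b, (s b).2 = b) →
      StochDom
        (μcex.map fun x (b : Fin 3) => x (0, b) || x (1, b) || x (2, b))
        (ρcex.map fun x (b : Fin 3) => x (s b))) ∧
    -- yet `μcex` is not stochastically dominated by `ρcex`
    ¬ StochDom μcex ρcex := by
  refine ⟨?_, fun s hs => ?_, fun h => ?_⟩
  · rw [μcex_eq_empiricalMeasure]
    exact empiricalMeasure_apply_of_forall_mem (by decide)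
  · have hmarg : (fun (x : Config) (b : Fin 3) => x (s b)) = fun x b => x ((s b).1, b) :=
      funext fun x => funext fun b => congrArg x (Prod.ext rfl (hs b))
    obtain ⟨g, hg⟩ := exists_perm_pushdown_le_marginal fun b => (s b).1
    rw [μcex_eq_empiricalMeasure, ρcex_eq_empiricalMeasure, hmarg,
      map_empiricalMeasure (measurable_of_countable _),
      map_empiricalMeasure (measurable_of_countable _)]
    exact stochDom_empiricalMeasure_of_perm g hg
  · have key := h.apply_le_of_isUpperSet isUpperSet_upperSetNonzeroμAtoms
      (Set.to_countable _).measurableSet (Set.to_countable _).measurableSet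
    rw [μcex_upperSetNonzeroμAtoms, ρcex_upperSetNonzeroμAtoms] at key
    exact (ENNReal.div_lt_div_right (by norm_num) (by norm_num) (by norm_num)).not_ge key
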